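/- arXiv:2407.19440 — 4 statements merged into one kernel-verified Lean document; each statement's English description precedes it below -/
import Mathlib

section
/- Let (M, ρ) be a metric space and h : M → (0,∞) a continuous function. Define d on M ∪ {∞} by d(x,y) = min(ρ(x,y), h(x)+h(y)) for x,y ∈ M, d(x,∞) = h(x) for x ∈ M, and d(x,x) = 0. If h is 1-Lipschitz with respect to ρ, then d is a metric on M ∪ {∞}. -/
/-- The Mandelkern distance on `M ∪ {∞}` (coded as `Option M`, with `none = ∞`)
built from a function `h : M → ℝ`. -/
noncomputable def onePointDist {M : Type*} [MetricSpace M] (h : M → ℝ) :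
    Option M → Option M → ℝ
  | Option.some x, Option.some y => min (dist x y) (h x + h y)
  | Option.some x, Option.none => h x
  | Option.none, Option.some y => h y
  | Option.none, Option.none => 0

/-- if `h : M → (0,∞)` is continuous and `1`-Lipschitz, then
`d(x,y) = min(ρ(x,y), h(x)+h(y))`, `d(x,∞) = h(x)`, `d(z,z) = 0` defines a
metric on `M ∪ {∞}`. -/
theorem stmt2 (M : Type*) [MetricSpace M] (h : M → ℝ)
    (hpos : ∀ x, 0 < h x) (hcont : Continuous h)
    (hlip : ∀ x y, |h x - h y| ≤ dist x y) :
    (∀ z w : Option M, onePointDist h z w = 0 ↔ z = w) ∧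
    (∀ z w : Option M, onePointDist h z w = onePointDist h w z) ∧
    (∀ z w u : Option M, onePointDist h z u ≤ onePointDist h z w + onePointDist h w u) := by
  refine ⟨?_, ?_, ?_⟩
  · rintro (_|x) (_|y) <;> simp [onePointDist]
    · exact (hpos y).ne'
    · exact (hpos x).ne'
    · constructor
      · intro hmin
        rcases min_eq_iff.mp hmin with h1 | h1
        · exact dist_eq_zero.mp h1.1
        · nlinarith [hpos x, hpos y]
      · rintro rfl
        simp
        linarith [hpos x]
  · rintro (_|x) (_|y) <;> simp [onePointDist, dist_comm, add_comm, min_comm]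
  · have key : ∀ x y : M, h x ≤ h y + dist x y := fun x y => by
      have := abs_le.mp (hlip x y); linarith [this.2]
    rintro (_|x) (_|y) (_|z) <;> simp only [onePointDist]
    · linarith
    · linarith
    · linarith [hpos y]
    · rcases min_cases (dist y z) (h y + h z) with ⟨he, _⟩ | ⟨he, _⟩ <;> rw [he]
      · have := key z y; rw [dist_comm] at this; linarith
      · linarith [hpos y]
    · linarith
    · linarith [min_le_right (dist x z) (h x + h z)]
    · rcases min_cases (dist x y) (h x + h y) with ⟨he, _⟩ | ⟨he, _⟩ <;> rw [he]
      · linarith [key x y]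
      · linarith [hpos y]
    · rcases min_cases (dist x y) (h x + h y) with ⟨he1, _⟩ | ⟨he1, _⟩ <;>
      rcases min_cases (dist y z) (h y + h z) with ⟨he2, _⟩ | ⟨he2, _⟩ <;>
      rw [he1, he2]
      · exact le_trans (min_le_left _ _) (dist_triangle x y z)
      · exact le_trans (min_le_right _ _) (by linarith [key x y])
      · exact le_trans (min_le_right _ _) (by linarith [key z y, dist_comm y z ▸ key z y])
      · exact le_trans (min_le_right _ _) (by linarith [hpos y])
end

section
/- Every locally compact Polish space admits a compatible complete metric that is proper, i.e., in which every closed bounded set (equivalently, every closed ball) is compact. -/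
open Set Metric

/-- A locally compact σ-compact regular space admits a continuous proper real function. -/
theorem exists_proper_real (X : Type*) [TopologicalSpace X] [RegularSpace X]
    [LocallyCompactSpace X] [SigmaCompactSpace X] :
    ∃ f : X → ℝ, Continuous f ∧ ∀ c : ℝ, IsCompact {x | f x ≤ c} := by
  set K : CompactExhaustion X := CompactExhaustion.choice X with hK
  have H : ∀ n : ℕ, ∃ g : C(X, ℝ), EqOn g 0 (K (n + 1)) ∧ EqOn g 1 (interior (K (n + 2)))ᶜ ∧
      ∀ x, g x ∈ Icc (0 : ℝ) 1 := fun n =>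
    exists_continuous_zero_one_of_isCompact (K.isCompact (n + 1))
      isOpen_interior.isClosed_compl
      (disjoint_compl_right.mono_left (K.subset_interior_succ (n + 1)))
  choose u h0 h1 h01 using H
  -- vanishing of u n on K m for small m
  have key : ∀ (m : ℕ) (x : X), x ∈ K m → ∀ n, m ≤ n + 1 → u n x = 0 := by
    intro m x hx n hmn
    have := h0 n (K.subset hmn hx)
    simpa using this
  have hsum : ∀ x : X, Summable (fun n => u n x) := by
    intro x
    obtain ⟨m, hm⟩ := K.exists_mem x
    refine summable_of_ne_finset_zero (s := Finset.range m) ?_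
    intro n hn
    simp only [Finset.mem_range, not_lt] at hn
    exact key m x hm n (hn.trans (Nat.le_succ n))
  refine ⟨fun x => ∑' n, u n x, ?_, ?_⟩
  · rw [continuous_iff_continuousAt]
    intro x
    obtain ⟨m, hm⟩ := K.exists_mem x
    have hU : interior (K (m + 1)) ∈ nhds x :=
      isOpen_interior.mem_nhds (K.subset_interior_succ m hm)
    have hAt : ContinuousAt (fun y => ∑ n ∈ Finset.range (m + 1), u n y) x :=
      (continuous_finset_sum _ fun n _ => (u n).continuous).continuousAt
    refine hAt.congr (Filter.eventuallyEq_of_mem hU fun y hy => ?_)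
    have hyK : y ∈ K (m + 1) := interior_subset hy
    exact (tsum_eq_sum (fun n hn => by
      simp only [Finset.mem_range, not_lt] at hn
      exact key (m + 1) y hyK n (hn.trans (Nat.le_succ n)))).symm
  · intro c
    have hsub : {x | ∑' n, u n x ≤ c} ⊆ K (⌈c⌉₊ + 2) := by
      intro x hx
      by_contra hxK
      set N := ⌈c⌉₊
      have hone : ∀ n ∈ Finset.range (N + 1), u n x = 1 := by
        intro n hn
        simp only [Finset.mem_range, Nat.lt_succ_iff] at hn
        have hx2 : x ∉ interior (K (n + 2)) := fun h =>
          hxK (K.subset (by omega) (interior_subset h))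
        simpa using h1 n hx2
      have hge : (N + 1 : ℝ) ≤ ∑' n, u n x := by
        calc (N + 1 : ℝ) = ∑ n ∈ Finset.range (N + 1), u n x := by
              rw [Finset.sum_congr rfl hone]; simp
          _ ≤ ∑' n, u n x :=
              Summable.sum_le_tsum _ (fun n _ => (h01 n x).1) (hsum x)
      have : (N + 1 : ℝ) ≤ c := le_trans hge hx
      have : c < N + 1 := lt_of_le_of_lt (Nat.le_ceil c) (by exact_mod_cast Nat.lt_succ_self N)
      linarith
    have hclosed : IsClosed {x | ∑' n, u n x ≤ c} := by
      refine isClosed_le ?_ continuous_const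
      rw [continuous_iff_continuousAt]
      intro x
      obtain ⟨m, hm⟩ := K.exists_mem x
      have hU : interior (K (m + 1)) ∈ nhds x :=
        isOpen_interior.mem_nhds (K.subset_interior_succ m hm)
      have hAt : ContinuousAt (fun y => ∑ n ∈ Finset.range (m + 1), u n y) x :=
        (continuous_finset_sum _ fun n _ => (u n).continuous).continuousAt
      refine hAt.congr (Filter.eventuallyEq_of_mem hU fun y hy => ?_)
      have hyK : y ∈ K (m + 1) := interior_subset hy
      exact (tsum_eq_sum (fun n hn => by
        simp only [Finset.mem_range, not_lt] at hn
        exact key (m + 1) y hyK n (hn.trans (Nat.le_succ n)))).symm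
    exact (K.isCompact _).of_isClosed_subset hclosed hsub

theorem key_metric {X : Type*} [m₀ : MetricSpace X] (f : X → ℝ) (hf : Continuous f)
    (hfc : ∀ c : ℝ, IsCompact {x | f x ≤ c}) :
    ∃ m : MetricSpace X, m.toUniformSpace.toTopologicalSpace = m₀.toUniformSpace.toTopologicalSpace
      ∧ @CompleteSpace X m.toUniformSpace ∧ @ProperSpace X m.toPseudoMetricSpace := by
  have hinj : Function.Injective (fun x => (x, f x) : X → X × ℝ) :=
    fun a b h => congrArg Prod.fst h
  have h1 : (MetricSpace.induced (fun x => (x, f x)) hinj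
      inferInstance).toUniformSpace.toTopologicalSpace
      = TopologicalSpace.induced (fun x => (x, f x)) instTopologicalSpaceProd := rfl
  have htop : (MetricSpace.induced (fun x => (x, f x)) hinj
      inferInstance).toUniformSpace.toTopologicalSpace
      = m₀.toUniformSpace.toTopologicalSpace :=
    h1.trans (isEmbedding_graph hf).toIsInducing.eq_induced.symm
  have hdist : ∀ x y : X, @dist X (MetricSpace.induced (fun x => (x, f x)) hinj
        inferInstance).toPseudoMetricSpace.toDist x y
      = max (@dist X m₀.toPseudoMetricSpace.toDist x y) (dist (f x) (f y)) :=
    fun x y => Prod.dist_eq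
  have hproper : @ProperSpace X (MetricSpace.induced (fun x => (x, f x)) hinj
      inferInstance).toPseudoMetricSpace := by
    refine @ProperSpace.mk X (MetricSpace.induced (fun x => (x, f x)) hinj
      inferInstance).toPseudoMetricSpace (fun x r => ?_)
    have hsub : @Metric.closedBall X (MetricSpace.induced (fun x => (x, f x)) hinj
        inferInstance).toPseudoMetricSpace x r ⊆ {y | f y ≤ f x + r} := by
      intro y hy
      have h2 : @dist X (MetricSpace.induced (fun x => (x, f x)) hinj
          inferInstance).toPseudoMetricSpace.toDist y x ≤ r := hy
      rw [hdist] at h2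
      have h3 : dist (f y) (f x) ≤ r := le_trans (le_max_right _ _) h2
      have h4 : f y - f x ≤ r := le_trans (le_abs_self _) (by rwa [Real.dist_eq] at h3)
      simpa using by linarith
    have hcomp : @IsCompact X (MetricSpace.induced (fun x => (x, f x)) hinj
        inferInstance).toUniformSpace.toTopologicalSpace {y | f y ≤ f x + r} := by
      rw [htop]; exact hfc _
    have hclosed : @IsClosed X (MetricSpace.induced (fun x => (x, f x)) hinj
          inferInstance).toUniformSpace.toTopologicalSpace
        (@Metric.closedBall X (MetricSpace.induced (fun x => (x, f x)) hinj
          inferInstance).toPseudoMetricSpace x r) :=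
      @Metric.isClosed_closedBall X (MetricSpace.induced (fun x => (x, f x)) hinj
        inferInstance).toPseudoMetricSpace x r
    exact @IsCompact.of_isClosed_subset X (MetricSpace.induced (fun x => (x, f x)) hinj
      inferInstance).toUniformSpace.toTopologicalSpace _ _ hcomp hclosed hsub
  exact ⟨MetricSpace.induced (fun x => (x, f x)) hinj inferInstance, htop,
    @complete_of_proper X (MetricSpace.induced (fun x => (x, f x)) hinj
      inferInstance).toPseudoMetricSpace hproper, hproper⟩

/-- every locally compact Polish space admits a compatible complete
proper (Heine–Borel) metric. -/
theorem stmt3 (X : Type*) [t : TopologicalSpace X] [PolishSpace X] [LocallyCompactSpace X] :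
    ∃ m : MetricSpace X, m.toUniformSpace.toTopologicalSpace = t ∧
      @CompleteSpace X m.toUniformSpace ∧ @ProperSpace X m.toPseudoMetricSpace := by
  obtain ⟨f, hf, hfc⟩ := exists_proper_real X
  letI m₀ : MetricSpace X := TopologicalSpace.metrizableSpaceMetric X
  have h0 : m₀.toUniformSpace.toTopologicalSpace = t := rfl
  obtain ⟨m, hm, hc, hp⟩ := key_metric f hf hfc
  exact ⟨m, hm.trans h0, hc, hp⟩
end

section
/- If G is a totally disconnected locally compact Polish group, then its Chabauty space S(G) is totally disconnected; consequently, if S(G) has no isolated points, then S(G) is homeomorphic to the Cantor space. -/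
/-- The space of closed subgroups of `G`. -/
def ClosedSubgroups (G : Type*) [Group G] [TopologicalSpace G] :=
  {H : Subgroup G // IsClosed (H : Set G)}

/-- The Chabauty topology on the closed subgroups of `G`. -/
def chabautyTopology (G : Type*) [Group G] [TopologicalSpace G] :
    TopologicalSpace (ClosedSubgroups G) :=
  TopologicalSpace.generateFrom
    ({S | ∃ K : Set G, IsCompact K ∧ S = {H : ClosedSubgroups G | (H.1 : Set G) ∩ K = ∅}} ∪
     {S | ∃ V : Set G, IsOpen V ∧ S = {H : ClosedSubgroups G | ((H.1 : Set G) ∩ V).Nonempty}})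

open Topology Set Metric

set_option linter.unusedSectionVars false
set_option linter.unusedVariables false
set_option maxHeartbeats 1000000

namespace Stmt17Aux

section Brouwer

variable {X : Type*} [MetricSpace X] [CompactSpace X] [TotallyDisconnectedSpace X]

lemma bddAll (s : Set X) : Bornology.IsBounded s :=
  isCompact_univ.isBounded.subset (Set.subset_univ s)

lemma exists_clopen_small {U : Set X} (hU : IsOpen U) {x : X} (hx : x ∈ U) {ε : ℝ} (hε : 0 < ε) :
    ∃ V : Set X, IsClopen V ∧ x ∈ V ∧ V ⊆ U ∧ Metric.diam V ≤ ε := by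
  obtain ⟨V, hV, hxV, hVsub⟩ := compact_exists_isClopen_in_isOpen
    (hU.inter Metric.isOpen_ball) ⟨hx, Metric.mem_ball_self (by positivity : (0:ℝ) < ε/2)⟩
  refine ⟨V, hV, hxV, fun y hy => (hVsub hy).1, ?_⟩
  calc Metric.diam V ≤ Metric.diam (Metric.ball x (ε/2)) :=
        Metric.diam_mono (fun y hy => (hVsub hy).2) Metric.isBounded_ball
    _ ≤ 2 * (ε/2) := Metric.diam_ball (by positivity)
    _ = ε := by ring

/-- `F` is a partition of `U` into nonempty clopen pieces of diameter at most `ε`. -/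
def IsPart (U : Set X) (ε : ℝ) (F : Finset (Set X)) : Prop :=
  (∀ V ∈ F, IsClopen V ∧ V.Nonempty ∧ Metric.diam V ≤ ε) ∧
  (∀ V ∈ F, ∀ W ∈ F, V ≠ W → Disjoint V W) ∧
  ⋃₀ (↑F : Set (Set X)) = U

lemma disjointify {ε : ℝ} : ∀ (s : Finset (Set X)),
    (∀ V ∈ s, IsClopen V ∧ Metric.diam V ≤ ε) →
    ∃ F : Finset (Set X), (∀ V ∈ F, IsClopen V ∧ V.Nonempty ∧ Metric.diam V ≤ ε) ∧
      (∀ V ∈ F, ∀ W ∈ F, V ≠ W → Disjoint V W) ∧ ⋃₀ (↑F : Set (Set X)) = ⋃₀ (↑s : Set (Set X)) := by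
  classical
  intro s
  induction s using Finset.induction_on with
  | empty => exact fun _ => ⟨∅, by simp, by simp, by simp⟩
  | @insert V s hVs ih =>
    intro h
    obtain ⟨F, hF1, hF2, hF3⟩ := ih (fun W hW => h W (Finset.mem_insert_of_mem hW))
    have hVc := h V (Finset.mem_insert_self V s)
    have hsClopen : IsClopen (⋃₀ (↑s : Set (Set X))) := by
      rw [Set.sUnion_eq_biUnion]
      exact Set.Finite.isClopen_biUnion s.finite_toSet
        (fun W hW => (h W (Finset.mem_insert_of_mem hW)).1)
    set V' := V \ ⋃₀ (↑s : Set (Set X)) with hV'def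
    have hV'clopen : IsClopen V' := hVc.1.diff hsClopen
    have hcoeins : ⋃₀ (↑(insert V s) : Set (Set X)) = V ∪ ⋃₀ (↑s : Set (Set X)) := by
      simp
    by_cases hne : V'.Nonempty
    · refine ⟨insert V' F, ?_, ?_, ?_⟩
      · intro W hW
        rcases Finset.mem_insert.mp hW with rfl | hW
        · exact ⟨hV'clopen, hne,
            le_trans (Metric.diam_mono Set.diff_subset (bddAll V)) hVc.2⟩
        · exact hF1 W hW
      · intro W hW W' hW' hne'
        rcases Finset.mem_insert.mp hW with rfl | hW <;>
          rcases Finset.mem_insert.mp hW' with rfl | hW'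
        · exact absurd rfl hne'
        · exact Set.disjoint_sdiff_left.mono_right
            (hF3 ▸ Set.subset_sUnion_of_mem (by exact_mod_cast hW'))
        · exact (Set.disjoint_sdiff_left.mono_right
            (hF3 ▸ Set.subset_sUnion_of_mem (by exact_mod_cast hW))).symm
        · exact hF2 W hW W' hW' hne'
      · have : ⋃₀ (↑(insert V' F) : Set (Set X)) = V' ∪ ⋃₀ (↑F : Set (Set X)) := by simp
        rw [this, hF3, hcoeins, hV'def, Set.diff_union_self]
    · refine ⟨F, hF1, hF2, ?_⟩
      rw [hF3, hcoeins]
      have : V ⊆ ⋃₀ (↑s : Set (Set X)) := by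
        rw [← Set.diff_eq_empty, ← hV'def]
        exact Set.not_nonempty_iff_eq_empty.mp hne
      rw [Set.union_eq_self_of_subset_left this]

lemma exists_partition {U : Set X} (hU : IsClopen U) {ε : ℝ} (hε : 0 < ε) :
    ∃ F : Finset (Set X), IsPart U ε F := by
  classical
  have hUc : IsCompact U := hU.1.isCompact
  rcases Set.eq_empty_or_nonempty U with rfl | hUne
  · exact ⟨∅, by simp [IsPart], by simp, by simp⟩
  choose V hV hxV hVU hVd using fun x : U => exists_clopen_small hU.2 x.2 hε
  obtain ⟨t, ht⟩ := hUc.elim_finite_subcover V (fun x => (hV x).2)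
    (fun x hx => Set.mem_iUnion.2 ⟨⟨x, hx⟩, hxV ⟨x, hx⟩⟩)
  obtain ⟨F, h1, h2, h3⟩ := disjointify (t.image V)
    (by
      intro W hW
      simp only [Finset.mem_image] at hW
      obtain ⟨x, _, rfl⟩ := hW
      exact ⟨hV x, hVd x⟩)
  refine ⟨F, h1, h2, ?_⟩
  rw [h3]
  apply subset_antisymm
  · intro y hy
    simp only [Set.mem_sUnion, Finset.coe_image, Set.mem_image, Finset.mem_coe] at hy
    obtain ⟨W, ⟨x, _, rfl⟩, hyW⟩ := hy
    exact hVU x hyW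
  · intro y hy
    have := ht hy
    simp only [Set.mem_iUnion] at this
    obtain ⟨x, hx, hyx⟩ := this
    exact ⟨V x, by simp only [Finset.coe_image, Set.mem_image, Finset.mem_coe]; exact ⟨x, hx, rfl⟩, hyx⟩


lemma split (hp : ∀ x : X, (𝓝[≠] x).NeBot) {U : Set X} (hU : IsClopen U) (hne : U.Nonempty) :
    ∃ A B : Set X, IsClopen A ∧ IsClopen B ∧ A.Nonempty ∧ B.Nonempty ∧ Disjoint A B ∧ A ∪ B = U := by
  obtain ⟨x, hx⟩ := hne
  have hmem : U ∩ {x}ᶜ ∈ 𝓝[≠] x :=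
    Filter.inter_mem (mem_nhdsWithin_of_mem_nhds (hU.2.mem_nhds hx)) self_mem_nhdsWithin
  have := hp x
  obtain ⟨y, hyU, hyx⟩ := Filter.nonempty_of_mem (f := 𝓝[≠] x) hmem
  have hopen : IsOpen (U ∩ {y}ᶜ) := hU.2.inter isClosed_singleton.isOpen_compl
  have hxmem : x ∈ U ∩ {y}ᶜ := ⟨hx, fun h => hyx (by simp_all)⟩
  obtain ⟨A, hA, hxA, hAsub⟩ := compact_exists_isClopen_in_isOpen hopen hxmem
  refine ⟨A, U \ A, hA, hU.diff hA, ⟨x, hxA⟩, ⟨y, hyU, fun h => (hAsub h).2 rfl⟩,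
    Set.disjoint_sdiff_right, Set.union_diff_cancel (fun z hz => (hAsub hz).1)⟩

lemma pump (hp : ∀ x : X, (𝓝[≠] x).NeBot) {U : Set X} {ε : ℝ} {F : Finset (Set X)}
    (hF : IsPart U ε F) (hFne : F.Nonempty) :
    ∃ F' : Finset (Set X), IsPart U ε F' ∧ F'.card = F.card + 1 := by
  classical
  obtain ⟨V, hV⟩ := hFne
  obtain ⟨hVclopen, hVne, hVdiam⟩ := hF.1 V hV
  obtain ⟨A, B, hA, hB, hAne, hBne, hAB, hABU⟩ := split hp hVclopen hVne
  have hAV : A ⊆ V := hABU ▸ Set.subset_union_left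
  have hBV : B ⊆ V := hABU ▸ Set.subset_union_right
  have hABne : A ≠ B := by
    rintro rfl
    exact hAne.ne_empty (disjoint_self.mp hAB)
  have hdisj : ∀ W ∈ F, W ≠ V → Disjoint W V := fun W hW h => hF.2.1 W hW V hV h
  have hAnotin : A ∉ F.erase V := fun h =>
    hAne.ne_empty ((hdisj A (Finset.mem_of_mem_erase h) (Finset.ne_of_mem_erase h)).eq_bot_of_le hAV)
  have hBnotin : B ∉ F.erase V := fun h =>
    hBne.ne_empty ((hdisj B (Finset.mem_of_mem_erase h) (Finset.ne_of_mem_erase h)).eq_bot_of_le hBV)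
  have key : ∀ W ∈ F.erase V, Disjoint V W := fun W hW =>
    (hdisj W (Finset.mem_of_mem_erase hW) (Finset.ne_of_mem_erase hW)).symm
  refine ⟨insert A (insert B (F.erase V)), ⟨?_, ?_, ?_⟩, ?_⟩
  · intro W hW
    rcases Finset.mem_insert.mp hW with rfl | hW
    · exact ⟨hA, hAne, le_trans (Metric.diam_mono hAV (bddAll V)) hVdiam⟩
    rcases Finset.mem_insert.mp hW with rfl | hW
    · exact ⟨hB, hBne, le_trans (Metric.diam_mono hBV (bddAll V)) hVdiam⟩
    · exact hF.1 W (Finset.mem_of_mem_erase hW)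
  · intro W hW W' hW' hne'
    have hc : ∀ {Z : Set X}, Z ∈ insert A (insert B (F.erase V)) → Z = A ∨ Z = B ∨ Z ∈ F.erase V := by
      intro Z hZ; simpa using hZ
    rcases hc hW with rfl | rfl | hW2 <;> rcases hc hW' with rfl | rfl | hW2'
    · exact absurd rfl hne'
    · exact hAB
    · exact (key _ hW2').mono_left hAV
    · exact hAB.symm
    · exact absurd rfl hne'
    · exact (key _ hW2').mono_left hBV
    · exact ((key _ hW2).mono_left hAV).symm
    · exact ((key _ hW2).mono_left hBV).symm
    · exact hF.2.1 W (Finset.mem_of_mem_erase hW2) W' (Finset.mem_of_mem_erase hW2') hne'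
  · have h1 : ⋃₀ (↑(insert A (insert B (F.erase V))) : Set (Set X))
        = (A ∪ B) ∪ ⋃₀ (↑(F.erase V) : Set (Set X)) := by
      simp [Set.union_assoc]
    have h2 : V ∪ ⋃₀ (↑(F.erase V) : Set (Set X)) = ⋃₀ (↑F : Set (Set X)) := by
      rw [← Set.sUnion_insert, ← Finset.coe_insert, Finset.insert_erase hV]
    rw [h1, hABU, h2, hF.2.2]
  · have hAnotin2 : A ∉ insert B (F.erase V) := by
      simp only [Finset.mem_insert]
      rintro (rfl | h)
      · exact hABne rfl
      · exact hAnotin h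
    rw [Finset.card_insert_of_notMem hAnotin2, Finset.card_insert_of_notMem hBnotin,
      Finset.card_erase_of_mem hV]
    have : 1 ≤ F.card := Finset.card_pos.mpr ⟨V, hV⟩
    omega

lemma exists_partition_card (hp : ∀ x : X, (𝓝[≠] x).NeBot) {U : Set X} (hU : IsClopen U)
    (hne : U.Nonempty) {ε : ℝ} (hε : 0 < ε)
    (hex : ∃ F : Finset (Set X), IsPart U ε F) :
    ∃ k₀ : ℕ, ∀ n, k₀ ≤ n → ∃ F : Finset (Set X), IsPart U ε F ∧ F.card = n := by
  obtain ⟨F, hF⟩ := hex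
  have hFne : F.Nonempty := by
    obtain ⟨x, hx⟩ := hne
    rw [← hF.2.2] at hx
    obtain ⟨V, hVF, _⟩ := hx
    exact ⟨V, by exact_mod_cast hVF⟩
  have hone : 1 ≤ F.card := Finset.card_pos.mpr hFne
  refine ⟨F.card, fun n hn => ?_⟩
  induction n, hn using Nat.le_induction with
  | base => exact ⟨F, hF, rfl⟩
  | succ n hn ih =>
    obtain ⟨F', hF', hcard⟩ := ih
    have hF'ne : F'.Nonempty := Finset.card_pos.mp (by omega)
    obtain ⟨F'', hF'', hcard''⟩ := pump hp hF' hF'ne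
    exact ⟨F'', hF'', by omega⟩


/-- `a` and `b` agree on the first `m` coordinates. -/
def Agree (m : ℕ) (a b : ℕ → Bool) : Prop := ∀ i, i < m → a i = b i

/-- Invariants of level `n` of the tree of clopen partitions. -/
def Good (n : ℕ) (s : ℕ × ((ℕ → Bool) → Set X)) : Prop :=
  n ≤ s.1 ∧ (∀ a, IsClopen (s.2 a)) ∧ (∀ a, (s.2 a).Nonempty) ∧
  (∀ a b, Agree s.1 a b → s.2 a = s.2 b) ∧ (∀ x, ∃ a, x ∈ s.2 a) ∧
  (∀ a b, ¬ Agree s.1 a b → Disjoint (s.2 a) (s.2 b)) ∧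
  (∀ a, n ≠ 0 → Metric.diam (s.2 a) ≤ 1 / (n : ℝ))

lemma step_exists (hp : ∀ x : X, (𝓝[≠] x).NeBot) (n : ℕ) (s : ℕ × ((ℕ → Bool) → Set X))
    (hs : Good n s) : ∃ t, Good (n+1) t ∧ s.1 < t.1 ∧ ∀ a, t.2 a ⊆ s.2 a := by
  classical
  obtain ⟨m, P⟩ := s
  obtain ⟨hmn, hcl, hne, hdep, hcov, hdis, -⟩ := hs
  simp only at hmn hcl hne hdep hcov hdis ⊢
  have hε : (0:ℝ) < 1/((n:ℝ)+1) := by positivity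
  set ext : (Fin m → Bool) → (ℕ → Bool) := fun p i => if h : i < m then p ⟨i, h⟩ else false
    with hext
  have hextlt : ∀ p (i : ℕ) (h : i < m), ext p i = p ⟨i, h⟩ := fun p i h => dif_pos h
  choose k₀ hk₀ using fun p : Fin m → Bool =>
    exists_partition_card hp (hcl (ext p)) (hne (ext p)) hε (exists_partition (hcl (ext p)) hε)
  set j : ℕ := (Finset.univ.sup k₀) + 1 with hjdef
  have hj1 : 1 ≤ j := Nat.le_add_left 1 _
  have hjk : ∀ p, k₀ p ≤ 2 ^ j := fun p =>
    le_trans (le_trans (Finset.le_sup (Finset.mem_univ p)) (Nat.le_succ _)) (Nat.lt_two_pow_self (n := j)).le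
  choose F hFpart hFcard using fun p => hk₀ p (2 ^ j) (hjk p)
  have hcard : ∀ p : Fin m → Bool, Fintype.card (Fin j → Bool) = Fintype.card {V // V ∈ F p} := by
    intro p
    rw [Fintype.card_coe, hFcard]
    simp [Fintype.card_fun]
  set e : ∀ p : Fin m → Bool, (Fin j → Bool) ≃ {V // V ∈ F p} :=
    fun p => Fintype.equivOfCardEq (hcard p) with he
  set W : (Fin m → Bool) → (Fin j → Bool) → Set X := fun p q => ((e p q : Set X)) with hW
  have hWmem : ∀ p q, W p q ∈ F p := fun p q => (e p q).2
  have hWclopen : ∀ p q, IsClopen (W p q) := fun p q => ((hFpart p).1 _ (hWmem p q)).1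
  have hWne : ∀ p q, (W p q).Nonempty := fun p q => ((hFpart p).1 _ (hWmem p q)).2.1
  have hWdiam : ∀ p q, Metric.diam (W p q) ≤ 1/((n:ℝ)+1) :=
    fun p q => ((hFpart p).1 _ (hWmem p q)).2.2
  have hWsub : ∀ p q, W p q ⊆ P (ext p) := fun p q =>
    (hFpart p).2.2 ▸ Set.subset_sUnion_of_mem (by exact_mod_cast hWmem p q)
  have hWdisj : ∀ p q q', q ≠ q' → Disjoint (W p q) (W p q') := by
    intro p q q' hqq'
    refine (hFpart p).2.1 _ (hWmem p q) _ (hWmem p q') (fun hEq => hqq' ?_)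
    exact (e p).injective (Subtype.ext hEq)
  have hWcov : ∀ p x, x ∈ P (ext p) → ∃ q, x ∈ W p q := by
    intro p x hx
    rw [← (hFpart p).2.2] at hx
    obtain ⟨V, hVF, hxV⟩ := hx
    have hVF' : V ∈ F p := by exact_mod_cast hVF
    refine ⟨(e p).symm ⟨V, hVF'⟩, ?_⟩
    have : W p ((e p).symm ⟨V, hVF'⟩) = V := by
      rw [hW]; simp
    rwa [this]
  set pre : (ℕ → Bool) → (Fin m → Bool) := fun a i => a i with hpre
  set mid : (ℕ → Bool) → (Fin j → Bool) := fun a i => a (m + i) with hmid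
  have hPpre : ∀ a, P (ext (pre a)) = P a := by
    intro a
    apply hdep
    intro i hi
    rw [hextlt _ _ hi]
  refine ⟨(m + j, fun a => W (pre a) (mid a)), ⟨?_, ?_, ?_, ?_, ?_, ?_, ?_⟩, ?_, ?_⟩
  · simp only; omega
  · exact fun a => hWclopen _ _
  · exact fun a => hWne _ _
  · intro a b hab
    have h1 : pre a = pre b := funext fun i => hab i (lt_of_lt_of_le i.2 (Nat.le_add_right m j))
    have h2 : mid a = mid b := funext fun i => hab (m + i) (by have := i.2; omega)
    show W (pre a) (mid a) = W (pre b) (mid b)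
    rw [h1, h2]
  · intro x
    obtain ⟨a, ha⟩ := hcov x
    obtain ⟨q, hq⟩ := hWcov (pre a) x (by rwa [hPpre])
    set a' : ℕ → Bool := fun i => if h : i < m then a i else
      if h2 : i - m < j then q ⟨i - m, h2⟩ else false with ha'
    refine ⟨a', ?_⟩
    show x ∈ W (pre a') (mid a')
    have hpre' : pre a' = pre a := by
      funext i
      simp only [hpre, ha', dif_pos i.2]
    have hmid' : mid a' = q := by
      funext i
      simp only [hmid, ha']
      rw [dif_neg (by omega)]
      simp only [Nat.add_sub_cancel_left]
      rw [dif_pos i.2]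
    rw [hpre', hmid']
    exact hq
  · intro a b hnab
    show Disjoint (W (pre a) (mid a)) (W (pre b) (mid b))
    by_cases hpab : pre a = pre b
    · have hmidne : mid a ≠ mid b := by
        intro hmid_eq
        apply hnab
        intro i hi
        by_cases him : i < m
        · exact congrFun hpab ⟨i, him⟩
        · have hi2 : i - m < j := by omega
          have h3 := congrFun hmid_eq ⟨i - m, hi2⟩
          simp only [hmid] at h3
          rwa [Nat.add_sub_cancel' (Nat.le_of_not_lt him)] at h3
      rw [hpab]
      exact hWdisj _ _ _ hmidne
    · have hnag : ¬ Agree m (ext (pre a)) (ext (pre b)) := by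
        intro hag
        apply hpab
        funext i
        have := hag i i.2
        rwa [hextlt _ _ i.2, hextlt _ _ i.2] at this
      exact (hdis _ _ hnag).mono (hWsub _ _) (hWsub _ _)
  · intro a _
    show Metric.diam (W (pre a) (mid a)) ≤ 1 / ((n+1 : ℕ) : ℝ)
    push_cast
    exact hWdiam (pre a) (mid a)
  · simp only; omega
  · intro a
    show W (pre a) (mid a) ⊆ P a
    exact (hPpre a) ▸ hWsub (pre a) (mid a)

lemma good_zero [Nonempty X] : Good 0 ((0 : ℕ), fun _ => (Set.univ : Set X)) := by
  refine ⟨le_rfl, fun _ => isClopen_univ, fun _ => Set.univ_nonempty, fun _ _ _ => rfl,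
    fun x => ⟨fun _ => false, Set.mem_univ x⟩, fun a b hab => ?_, fun _ h => absurd rfl h⟩
  exact absurd (fun i hi => absurd hi (Nat.not_lt_zero i)) hab

noncomputable def seq [Nonempty X] (hp : ∀ x : X, (𝓝[≠] x).NeBot) :
    ∀ n : ℕ, {s : ℕ × ((ℕ → Bool) → Set X) // Good n s}
  | 0 => ⟨((0 : ℕ), fun _ => Set.univ), good_zero⟩
  | n+1 => ⟨(step_exists hp n _ (seq hp n).2).choose,
      (step_exists hp n _ (seq hp n).2).choose_spec.1⟩

lemma seq_sub [Nonempty X] (hp : ∀ x : X, (𝓝[≠] x).NeBot) (n : ℕ) :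
    ∀ a, (seq hp (n+1)).1.2 a ⊆ (seq hp n).1.2 a :=
  (step_exists hp n _ (seq hp n).2).choose_spec.2.2

theorem brouwer_metric [Nonempty X] (hp : ∀ x : X, (𝓝[≠] x).NeBot) :
    Nonempty (X ≃ₜ (ℕ → Bool)) := by
  classical
  set M : ℕ → ℕ := fun n => (seq hp n).1.1 with hMdef
  set P : ℕ → (ℕ → Bool) → Set X := fun n => (seq hp n).1.2 with hPdef
  have good : ∀ n, Good n (M n, P n) := fun n => (seq hp n).2
  have hM : ∀ n, n ≤ M n := fun n => (good n).1
  have hcl : ∀ n a, IsClopen (P n a) := fun n => (good n).2.1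
  have hne : ∀ n a, (P n a).Nonempty := fun n => (good n).2.2.1
  have hdep : ∀ n a b, Agree (M n) a b → P n a = P n b := fun n => (good n).2.2.2.1
  have hcov : ∀ n (x : X), ∃ a, x ∈ P n a := fun n => (good n).2.2.2.2.1
  have hdis : ∀ n a b, ¬ Agree (M n) a b → Disjoint (P n a) (P n b) := fun n => (good n).2.2.2.2.2.1
  have hdiam : ∀ n a, n ≠ 0 → Metric.diam (P n a) ≤ 1 / (n : ℝ) := fun n => (good n).2.2.2.2.2.2
  have hsub : ∀ n a, P (n+1) a ⊆ P n a := fun n => seq_sub hp n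
  have hanti : ∀ k n, k ≤ n → ∀ a, P n a ⊆ P k a := by
    intro k n h
    induction n, h using Nat.le_induction with
    | base => exact fun a => subset_rfl
    | succ n hn ih => exact fun a => (hsub n a).trans (ih a)
  have hIne : ∀ a, (⋂ n, P n a).Nonempty := fun a =>
    IsCompact.nonempty_iInter_of_sequence_nonempty_isCompact_isClosed _ (fun n => hsub n a)
      (fun n => hne n a) (hcl 0 a).1.isCompact (fun n => (hcl n a).1)
  choose g hg using hIne
  have hgmem : ∀ a n, g a ∈ P n a := fun a n => Set.mem_iInter.mp (hg a) n
  have ginj : Function.Injective g := by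
    intro a b hab
    by_contra hne'
    obtain ⟨i, hi⟩ := Function.ne_iff.mp hne'
    have hdisj := hdis (i+1) a b
      (fun h => hi (h i (lt_of_lt_of_le (Nat.lt_succ_self i) (hM (i+1)))))
    refine (Set.not_disjoint_iff.mpr ⟨g a, hgmem a (i+1), ?_⟩) hdisj
    rw [hab]; exact hgmem b (i+1)
  have gsurj : Function.Surjective g := by
    intro x
    choose aa haa using fun n => hcov n x
    have hfind : ∀ i : ℕ, ∃ n, i < M n := fun i =>
      ⟨i+1, lt_of_lt_of_le (Nat.lt_succ_self i) (hM (i+1))⟩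
    set a : ℕ → Bool := fun i => aa (Nat.find (hfind i)) i with hadef
    have key : ∀ n, x ∈ P n a := by
      intro n
      have hagree : Agree (M n) a (aa n) := by
        intro i hi
        have h1 : i < M (Nat.find (hfind i)) := Nat.find_spec (hfind i)
        have h2 : Nat.find (hfind i) ≤ n := Nat.find_min' (hfind i) hi
        have hx1 : x ∈ P (Nat.find (hfind i)) (aa n) := hanti _ n h2 _ (haa n)
        have hx2 : x ∈ P (Nat.find (hfind i)) (aa (Nat.find (hfind i))) := haa _
        have hagr : Agree (M (Nat.find (hfind i))) (aa (Nat.find (hfind i))) (aa n) := by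
          by_contra hcon
          exact Set.not_disjoint_iff.mpr ⟨x, hx2, hx1⟩ (hdis _ _ _ hcon)
        exact hagr i h1
      rw [hdep n a (aa n) hagree]
      exact haa n
    refine ⟨a, ?_⟩
    have hd : ∀ n : ℕ, dist (g a) x ≤ 1 / ((n+1 : ℕ) : ℝ) := fun n =>
      le_trans (Metric.dist_le_diam_of_mem (bddAll _) (hgmem a (n+1)) (key (n+1)))
        (hdiam (n+1) a (Nat.succ_ne_zero n))
    have hd0 : dist (g a) x ≤ 0 := by
      refine le_of_forall_pos_le_add (fun ε hε => ?_)
      obtain ⟨n, hn⟩ := exists_nat_one_div_lt hε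
      refine le_trans (hd n) ?_
      rw [zero_add]
      refine le_of_lt ?_
      push_cast
      exact hn
    exact dist_le_zero.mp hd0
  have gcont : Continuous g := by
    rw [continuous_iff_continuousAt]
    intro a
    rw [ContinuousAt, Metric.tendsto_nhds]
    intro ε hε
    obtain ⟨n, hn⟩ := exists_nat_one_div_lt hε
    set O : Set (ℕ → Bool) := ⋂ i ∈ Finset.range (M (n+1)), {b : ℕ → Bool | b i = a i} with hO
    have hOopen : IsOpen O := by
      refine isOpen_biInter_finset (fun i _ => ?_)
      have hrepr : {b : ℕ → Bool | b i = a i} = (fun b : ℕ → Bool => b i) ⁻¹' {a i} := rfl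
      rw [hrepr]
      exact (continuous_apply i).isOpen_preimage _ (isOpen_discrete _)
    have haO : a ∈ O := by simp [hO]
    refine Filter.mem_of_superset (hOopen.mem_nhds haO) ?_
    intro b hb
    have hagree : Agree (M (n+1)) b a := by
      intro i hi
      exact Set.mem_iInter₂.mp hb i (Finset.mem_range.mpr hi)
    have hPab : P (n+1) b = P (n+1) a := hdep (n+1) b a hagree
    show dist (g b) (g a) < ε
    calc dist (g b) (g a) ≤ Metric.diam (P (n+1) a) :=
          Metric.dist_le_diam_of_mem (bddAll _) (hPab ▸ hgmem b (n+1)) (hgmem a (n+1))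
      _ ≤ 1/((n+1:ℕ):ℝ) := hdiam (n+1) a (Nat.succ_ne_zero n)
      _ < ε := by push_cast; exact hn
  exact ⟨(Continuous.homeoOfEquivCompactToT2
    (f := Equiv.ofBijective g ⟨ginj, gsurj⟩) gcont).symm⟩

end Brouwer

section Chabauty

/-- A countable basis of compact open sets in a t.d.l.c. second countable space. -/
lemma tdlc_basis (G : Type*) [TopologicalSpace G] [LocallyCompactSpace G] [T2Space G]
    [TotallyDisconnectedSpace G] [SecondCountableTopology G] :
    ∃ D : Set (Set G), D.Countable ∧ (∀ C ∈ D, IsCompact C ∧ IsOpen C) ∧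
      ∀ (x : G) (U : Set G), x ∈ U → IsOpen U → ∃ C ∈ D, x ∈ C ∧ C ⊆ U := by
  classical
  have hco : ∀ (x : G) (U : Set G), x ∈ U → IsOpen U →
      ∃ C : Set G, IsCompact C ∧ IsOpen C ∧ x ∈ C ∧ C ⊆ U := by
    intro x U hx hU
    obtain ⟨K, hK, hxK, hKU⟩ := exists_compact_subset hU hx
    obtain ⟨V, hV, hxV, hVK⟩ :=
      loc_compact_Haus_tot_disc_of_zero_dim.exists_subset_of_mem_open hxK isOpen_interior
    exact ⟨V, hK.of_isClosed_subset hV.1 (hVK.trans interior_subset), hV.2, hxV,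
      (hVK.trans interior_subset).trans hKU⟩
  set B := TopologicalSpace.countableBasis G with hBdef
  have hB : TopologicalSpace.IsTopologicalBasis B := TopologicalSpace.isBasis_countableBasis G
  have hBc : B.Countable := TopologicalSpace.countable_countableBasis G
  set pick : Set G → Set G → Set (Set G) := fun b1 b2 =>
    if h : ∃ C : Set G, IsCompact C ∧ IsOpen C ∧ b1 ⊆ C ∧ C ⊆ b2 then {h.choose} else ∅
    with hpick
  refine ⟨⋃ b1 ∈ B, ⋃ b2 ∈ B, pick b1 b2, ?_, ?_, ?_⟩
  · refine hBc.biUnion (fun b1 _ => hBc.biUnion (fun b2 _ => ?_))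
    simp only [hpick]
    split
    · exact Set.countable_singleton _
    · exact Set.countable_empty
  · intro C hC
    simp only [Set.mem_iUnion] at hC
    obtain ⟨b1, -, b2, -, hC⟩ := hC
    simp only [hpick] at hC
    by_cases h : ∃ C : Set G, IsCompact C ∧ IsOpen C ∧ b1 ⊆ C ∧ C ⊆ b2
    · rw [dif_pos h] at hC
      rw [Set.mem_singleton_iff.mp hC]
      exact ⟨h.choose_spec.1, h.choose_spec.2.1⟩
    · rw [dif_neg h] at hC
      exact absurd hC (Set.notMem_empty C)
  · intro x U hx hU
    obtain ⟨b2, hb2B, hxb2, hb2U⟩ := hB.exists_subset_of_mem_open hx hU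
    obtain ⟨C', hC'c, hC'o, hxC', hC'b2⟩ := hco x b2 hxb2 (hB.isOpen hb2B)
    obtain ⟨b1, hb1B, hxb1, hb1C'⟩ := hB.exists_subset_of_mem_open hxC' hC'o
    have hex : ∃ C : Set G, IsCompact C ∧ IsOpen C ∧ b1 ⊆ C ∧ C ⊆ b2 :=
      ⟨C', hC'c, hC'o, hb1C', hC'b2⟩
    refine ⟨hex.choose, ?_, hex.choose_spec.2.2.1 hxb1, hex.choose_spec.2.2.2.trans hb2U⟩
    simp only [Set.mem_iUnion]
    refine ⟨b1, hb1B, b2, hb2B, ?_⟩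
    simp only [hpick]
    rw [dif_pos hex]
    exact rfl

variable {G : Type*} [Group G] [TopologicalSpace G]

/-- The embedding of the Chabauty space into a Cantor cube. -/
noncomputable def phi (D : Set (Set G)) : ClosedSubgroups G → (↥D → Bool) :=
  fun H C => @decide (((H.1 : Set G) ∩ ↑C).Nonempty) (Classical.propDecidable _)

lemma phi_true {D : Set (Set G)} {H : ClosedSubgroups G} {C : ↥D} :
    phi D H C = true ↔ ((H.1 : Set G) ∩ ↑C).Nonempty := by
  simp [phi]

lemma phi_false {D : Set (Set G)} {H : ClosedSubgroups G} {C : ↥D} :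
    phi D H C = false ↔ ((H.1 : Set G) ∩ ↑C) = ∅ := by
  simp [phi, Set.not_nonempty_iff_eq_empty]

lemma continuous_phi (D : Set (Set G)) (hDco : ∀ C ∈ D, IsCompact C ∧ IsOpen C) :
    @Continuous _ _ (chabautyTopology G) _ (phi D) := by
  letI := chabautyTopology G
  apply continuous_pi
  intro C
  rw [continuous_discrete_rng]
  intro b
  cases b
  · have : (fun H => phi D H C) ⁻¹' {false} =
        {H : ClosedSubgroups G | (H.1 : Set G) ∩ ↑C = ∅} := by
      ext H
      simp [phi_false]
    rw [this]
    exact TopologicalSpace.isOpen_generateFrom_of_mem (Or.inl ⟨↑C, (hDco _ C.2).1, rfl⟩)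
  · have : (fun H => phi D H C) ⁻¹' {true} =
        {H : ClosedSubgroups G | ((H.1 : Set G) ∩ ↑C).Nonempty} := by
      ext H
      simp [phi_true]
    rw [this]
    exact TopologicalSpace.isOpen_generateFrom_of_mem (Or.inr ⟨↑C, (hDco _ C.2).2, rfl⟩)

lemma chabauty_eq_induced (D : Set (Set G)) (hDco : ∀ C ∈ D, IsCompact C ∧ IsOpen C)
    (hDbasis : ∀ (x : G) (U : Set G), x ∈ U → IsOpen U → ∃ C ∈ D, x ∈ C ∧ C ⊆ U) :
    chabautyTopology G = TopologicalSpace.induced (phi D) inferInstance := by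
  classical
  refine le_antisymm (continuous_iff_le_induced.mp (continuous_phi D hDco)) ?_
  letI := TopologicalSpace.induced (phi D) (inferInstance : TopologicalSpace (↥D → Bool))
  have hcont : Continuous (phi D) := continuous_induced_dom
  have hev : ∀ (C : ↥D) (b : Bool), IsOpen {H : ClosedSubgroups G | phi D H C = b} := by
    intro C b
    have : {H : ClosedSubgroups G | phi D H C = b} =
        phi D ⁻¹' ((fun g : ↥D → Bool => g C) ⁻¹' {b}) := rfl
    rw [this]
    exact ((continuous_apply C).comp hcont).isOpen_preimage _ (isOpen_discrete _)
  refine le_generateFrom ?_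
  rintro S (⟨K, hK, rfl⟩ | ⟨V, hV, rfl⟩)
  · have hrepr : {H : ClosedSubgroups G | (H.1 : Set G) ∩ K = ∅} =
        ⋃ (t : Finset ↥D) (_ : K ⊆ ⋃ C ∈ t, (C : Set G)),
          ⋂ C ∈ t, {H : ClosedSubgroups G | phi D H C = false} := by
      ext H
      simp only [Set.mem_setOf_eq, Set.mem_iUnion, Set.mem_iInter]
      constructor
      · intro hH
        have hKsub : K ⊆ ⋃ c : {C : ↥D // (C : Set G) ⊆ ((H.1 : Set G))ᶜ}, (c.1 : Set G) := by
          intro x hx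
          have hxH : x ∈ ((H.1 : Set G))ᶜ := fun hxH =>
            Set.eq_empty_iff_forall_notMem.mp hH x ⟨hxH, hx⟩
          obtain ⟨C, hCD, hxC, hCsub⟩ := hDbasis x _ hxH H.2.isOpen_compl
          exact Set.mem_iUnion.mpr ⟨⟨⟨C, hCD⟩, hCsub⟩, hxC⟩
        obtain ⟨t, ht⟩ := hK.elim_finite_subcover _ (fun c => (hDco _ c.1.2).2) hKsub
        refine ⟨t.image (·.1), ?_, ?_⟩
        · intro x hx
          obtain ⟨c, hct, hxc⟩ := Set.mem_iUnion₂.mp (ht hx)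
          exact Set.mem_iUnion₂.mpr ⟨c.1, Finset.mem_image_of_mem _ hct, hxc⟩
        · intro C hC
          obtain ⟨c, -, rfl⟩ := Finset.mem_image.mp hC
          refine phi_false.mpr (Set.eq_empty_iff_forall_notMem.mpr ?_)
          rintro x ⟨hxH, hxc⟩
          exact c.2 hxc hxH
      · rintro ⟨t, hcover, hfalse⟩
        refine Set.eq_empty_iff_forall_notMem.mpr ?_
        rintro x ⟨hxH, hxK⟩
        obtain ⟨C, hCt, hxC⟩ := Set.mem_iUnion₂.mp (hcover hxK)
        have := phi_false.mp (hfalse C hCt)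
        exact Set.eq_empty_iff_forall_notMem.mp this x ⟨hxH, hxC⟩
    rw [hrepr]
    refine isOpen_iUnion (fun t => isOpen_iUnion (fun _ => ?_))
    exact isOpen_biInter_finset (fun C _ => hev C false)
  · have hrepr : {H : ClosedSubgroups G | ((H.1 : Set G) ∩ V).Nonempty} =
        ⋃ (C : ↥D) (_ : (C : Set G) ⊆ V), {H : ClosedSubgroups G | phi D H C = true} := by
      ext H
      simp only [Set.mem_setOf_eq, Set.mem_iUnion]
      constructor
      · rintro ⟨x, hxH, hxV⟩
        obtain ⟨C, hCD, hxC, hCsub⟩ := hDbasis x V hxV hV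
        exact ⟨⟨C, hCD⟩, hCsub, phi_true.mpr ⟨x, hxH, hxC⟩⟩
      · rintro ⟨C, hCV, hC⟩
        obtain ⟨x, hxH, hxC⟩ := phi_true.mp hC
        exact ⟨x, hxH, hCV hxC⟩
    rw [hrepr]
    exact isOpen_iUnion (fun C => isOpen_iUnion (fun _ => hev C true))

lemma phi_injective (D : Set (Set G))
    (hDbasis : ∀ (x : G) (U : Set G), x ∈ U → IsOpen U → ∃ C ∈ D, x ∈ C ∧ C ⊆ U) :
    Function.Injective (phi D) := by
  have key : ∀ (H K : ClosedSubgroups G), phi D H = phi D K → (H.1 : Set G) ⊆ (K.1 : Set G) := by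
    intro H K h x hx
    by_contra hxK
    obtain ⟨C, hCD, hxC, hsub⟩ := hDbasis x _ hxK K.2.isOpen_compl
    have h1 : phi D H ⟨C, hCD⟩ = true := phi_true.mpr ⟨x, hx, hxC⟩
    have h2 : phi D K ⟨C, hCD⟩ = true := by rw [← h]; exact h1
    obtain ⟨y, hyK, hyC⟩ := phi_true.mp h2
    exact hsub hyC hyK
  intro H K h
  exact Subtype.ext (SetLike.ext' (subset_antisymm (key H K h) (key K H h.symm)))


lemma isClosed_range_phi [IsTopologicalGroup G] (D : Set (Set G))
    (hDco : ∀ C ∈ D, IsCompact C ∧ IsOpen C)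
    (hDbasis : ∀ (x : G) (U : Set G), x ∈ U → IsOpen U → ∃ C ∈ D, x ∈ C ∧ C ⊆ U) :
    IsClosed (Set.range (phi D)) := by
  classical
  set A : Set (↥D → Bool) := {f |
    (∀ C : ↥D, (1:G) ∈ (C : Set G) → f C = true) ∧
    (∀ C C' : ↥D, (C : Set G) ⊆ (fun x : G => x⁻¹) ⁻¹' (C' : Set G) → f C = true → f C' = true) ∧
    (∀ C1 C2 C3 : ↥D, (∀ x ∈ (C1 : Set G), ∀ y ∈ (C2 : Set G), x * y ∈ (C3 : Set G)) →
      f C1 = true → f C2 = true → f C3 = true) ∧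
    (∀ (C : ↥D) (t : Finset ↥D), ((C : Set G) ⊆ ⋃ C' ∈ t, (C' : Set G)) → f C = true →
      ∃ C' ∈ t, f C' = true)} with hA
  have hrange : Set.range (phi D) = A := by
    apply subset_antisymm
    · rintro - ⟨H, rfl⟩
      refine ⟨?_, ?_, ?_, ?_⟩
      · intro C h1C
        exact phi_true.mpr ⟨1, H.1.one_mem, h1C⟩
      · intro C C' hsub hC
        obtain ⟨x, hxH, hxC⟩ := phi_true.mp hC
        exact phi_true.mpr ⟨x⁻¹, H.1.inv_mem hxH, hsub hxC⟩
      · intro C1 C2 C3 hsub h1 h2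
        obtain ⟨x, hxH, hxC⟩ := phi_true.mp h1
        obtain ⟨y, hyH, hyC⟩ := phi_true.mp h2
        exact phi_true.mpr ⟨x * y, H.1.mul_mem hxH hyH, hsub x hxC y hyC⟩
      · intro C t hcov hC
        obtain ⟨x, hxH, hxC⟩ := phi_true.mp hC
        obtain ⟨C', hC't, hxC'⟩ := Set.mem_iUnion₂.mp (hcov hxC)
        exact ⟨C', hC't, phi_true.mpr ⟨x, hxH, hxC'⟩⟩
    · rintro f ⟨h1, h2, h3, h4⟩
      set E : Set G := {x : G | ∀ C : ↥D, x ∈ (C : Set G) → f C = true} with hE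
      have hEmul : ∀ a b : G, a ∈ E → b ∈ E → a * b ∈ E := by
        intro a b ha hb C habC
        have hpre : (fun p : G × G => p.1 * p.2) ⁻¹' (C : Set G) ∈ 𝓝 (a, b) :=
          (continuous_mul.isOpen_preimage _ (hDco _ C.2).2).mem_nhds habC
        obtain ⟨u, v, hu, hau, hv, hbv, huv⟩ := mem_nhds_prod_iff'.mp hpre
        obtain ⟨C1, hC1D, haC1, hC1u⟩ := hDbasis a u hau hu
        obtain ⟨C2, hC2D, hbC2, hC2v⟩ := hDbasis b v hbv hv
        refine h3 ⟨C1, hC1D⟩ ⟨C2, hC2D⟩ C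
          (fun x hx y hy => huv (show (x, y) ∈ u ×ˢ v from
            ⟨hC1u (show x ∈ C1 from hx), hC2v (show y ∈ C2 from hy)⟩))
          (ha _ haC1) (hb _ hbC2)
      have hEinv : ∀ a : G, a ∈ E → a⁻¹ ∈ E := by
        intro a ha C haC
        have hopen : IsOpen ((fun x : G => x⁻¹) ⁻¹' (C : Set G)) :=
          continuous_inv.isOpen_preimage _ (hDco _ C.2).2
        obtain ⟨C'', hC''D, haC'', hsub⟩ :=
          hDbasis a ((fun x : G => x⁻¹) ⁻¹' (C : Set G))
            (show a ∈ (fun x : G => x⁻¹) ⁻¹' (C : Set G) from haC) hopen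
        exact h2 ⟨C'', hC''D⟩ C
          (show ((⟨C'', hC''D⟩ : ↥D) : Set G) ⊆ _ from hsub) (ha _ haC'')
      set EH : Subgroup G :=
        { carrier := E
          one_mem' := fun C h1C => h1 C h1C
          mul_mem' := fun {a b} ha hb => hEmul a b ha hb
          inv_mem' := fun {a} ha => hEinv a ha } with hEH
      have hEclosed : IsClosed E := by
        have : E = ⋂ C : ↥D, {x : G | x ∈ (C : Set G) → f C = true} := by
          ext x; simp [hE]
        rw [this]
        refine isClosed_iInter (fun C => ?_)
        by_cases hfC : f C = true
        · have : {x : G | x ∈ (C : Set G) → f C = true} = Set.univ := by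
            ext x; simp [hfC]
          rw [this]; exact isClosed_univ
        · have : {x : G | x ∈ (C : Set G) → f C = true} = ((C : Set G))ᶜ := by
            ext x; simp [hfC]
          rw [this]; exact ((hDco _ C.2).2).isClosed_compl
      refine ⟨⟨EH, hEclosed⟩, ?_⟩
      funext C
      by_cases hfC : f C = true
      · rw [hfC]
        apply phi_true.mpr
        by_contra hcon
        have hEC : ∀ x ∈ (C : Set G), x ∉ E := by
          intro x hxC hxE
          exact hcon ⟨x, hxE, hxC⟩
        have hcover : (C : Set G) ⊆ ⋃ c : {C' : ↥D // f C' = false}, (c.1 : Set G) := by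
          intro x hxC
          have hxE := hEC x hxC
          rw [hE, Set.mem_setOf_eq] at hxE
          push_neg at hxE
          obtain ⟨C', hxC', hfC'⟩ := hxE
          exact Set.mem_iUnion.mpr ⟨⟨C', Bool.not_eq_true _ ▸ hfC'⟩, hxC'⟩
        obtain ⟨t, ht⟩ := (hDco _ C.2).1.elim_finite_subcover _
          (fun c => (hDco _ c.1.2).2) hcover
        obtain ⟨C', hC't, hfC'⟩ := h4 C (t.image (·.1))
          (fun x hx => by
            obtain ⟨c, hct, hxc⟩ := Set.mem_iUnion₂.mp (ht hx)
            exact Set.mem_iUnion₂.mpr ⟨c.1, Finset.mem_image_of_mem _ hct, hxc⟩) hfC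
        obtain ⟨c, -, rfl⟩ := Finset.mem_image.mp hC't
        rw [c.2] at hfC'
        exact Bool.false_ne_true hfC'
      · rw [Bool.not_eq_true] at hfC
        rw [hfC]
        apply phi_false.mpr
        refine Set.eq_empty_iff_forall_notMem.mpr ?_
        rintro x ⟨hxE, hxC⟩
        have : f C = true := hxE C hxC
        rw [hfC] at this
        exact Bool.false_ne_true this
  rw [hrange]
  have hev : ∀ (C : ↥D) (b : Bool), IsClosed {f : ↥D → Bool | f C = b} := by
    intro C b
    have : {f : ↥D → Bool | f C = b} = (fun f : ↥D → Bool => f C) ⁻¹' {b} := rfl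
    rw [this]
    exact IsClosed.preimage (continuous_apply C) (isClosed_discrete _)
  have himp : ∀ (C : ↥D) (S : Set (↥D → Bool)), IsClosed S →
      IsClosed {f : ↥D → Bool | f C = true → f ∈ S} := by
    intro C S hS
    have : {f : ↥D → Bool | f C = true → f ∈ S} = {f : ↥D → Bool | f C = false} ∪ S := by
      ext f
      by_cases h : f C = true <;> simp [h]
    rw [this]
    exact (hev C false).union hS
  rw [hA]
  simp only [Set.setOf_and]
  refine IsClosed.inter ?_ (IsClosed.inter ?_ (IsClosed.inter ?_ ?_))
  · simp only [Set.setOf_forall]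
    exact isClosed_iInter fun C => isClosed_iInter fun _ => hev C true
  · simp only [Set.setOf_forall]
    exact isClosed_iInter fun C => isClosed_iInter fun C' => isClosed_iInter fun _ =>
      himp C _ (hev C' true)
  · simp only [Set.setOf_forall]
    exact isClosed_iInter fun C1 => isClosed_iInter fun C2 => isClosed_iInter fun C3 =>
      isClosed_iInter fun _ => himp C1 _ (himp C2 _ (hev C3 true))
  · simp only [Set.setOf_forall]
    refine isClosed_iInter fun C => isClosed_iInter fun t => isClosed_iInter fun _ => ?_
    have hclosed4 : IsClosed {f : ↥D → Bool | ∃ C' ∈ t, f C' = true} := by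
      have hset : {f : ↥D → Bool | ∃ C' ∈ t, f C' = true}
          = ⋃ C' ∈ t, {f : ↥D → Bool | f C' = true} := by
        ext f; simp
      rw [hset]
      exact Set.Finite.isClosed_biUnion t.finite_toSet (fun C' _ => hev C' true)
    exact himp C _ hclosed4

end Chabauty

end Stmt17Aux

/-- for a t.d.l.c. Polish group `G`, the Chabauty space `S(G)` is
totally disconnected; consequently, if `S(G)` has no isolated points, it is
homeomorphic to the Cantor space `{0,1}^ℕ`. -/
theorem stmt17 (G : Type*) [Group G] [TopologicalSpace G] [IsTopologicalGroup G]
    [PolishSpace G] [LocallyCompactSpace G] [TotallyDisconnectedSpace G] :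
    letI := chabautyTopology G
    TotallyDisconnectedSpace (ClosedSubgroups G) ∧
    ((∀ H : ClosedSubgroups G, Filter.NeBot (nhdsWithin H {H}ᶜ)) →
      Nonempty (ClosedSubgroups G ≃ₜ (ℕ → Bool))) := by
  classical
  obtain ⟨D, hDc, hDco, hDbasis⟩ := Stmt17Aux.tdlc_basis G
  haveI : Countable ↥D := hDc.to_subtype
  have hcont := Stmt17Aux.continuous_phi D hDco
  have heq := Stmt17Aux.chabauty_eq_induced D hDco hDbasis
  have hinj := Stmt17Aux.phi_injective D hDbasis
  have hclosed := Stmt17Aux.isClosed_range_phi D hDco hDbasis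
  letI := chabautyTopology G
  have hemb : IsEmbedding (Stmt17Aux.phi D) := ⟨⟨heq⟩, hinj⟩
  haveI hT2 : T2Space (ClosedSubgroups G) := hemb.t2Space
  haveI htd : TotallyDisconnectedSpace (ClosedSubgroups G) := by
    refine ⟨fun t _ ht => ?_⟩
    have himg : (Stmt17Aux.phi D '' t).Subsingleton :=
      isTotallyDisconnected_of_totallyDisconnectedSpace (Stmt17Aux.phi D '' t) _ subset_rfl
        (ht.image _ hcont.continuousOn)
    intro x hx y hy
    exact hinj (himg (Set.mem_image_of_mem _ hx) (Set.mem_image_of_mem _ hy))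
  haveI hcomp : CompactSpace (ClosedSubgroups G) := by
    rw [← isCompact_univ_iff, hemb.isCompact_iff, Set.image_univ]
    exact hclosed.isCompact
  haveI : SecondCountableTopology (ClosedSubgroups G) := hemb.secondCountableTopology
  haveI : TopologicalSpace.MetrizableSpace (ClosedSubgroups G) := inferInstance
  haveI : Nonempty (ClosedSubgroups G) :=
    ⟨⟨⊥, by rw [Subgroup.coe_bot]; exact isClosed_singleton⟩⟩
  refine ⟨htd, fun hperf => ?_⟩
  letI := TopologicalSpace.metrizableSpaceMetric (ClosedSubgroups G)
  exact Stmt17Aux.brouwer_metric hperf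
end

section
/- Let (M, ρ) be a locally compact, non-compact Polish space exhausted by nested compacts (K_n) with uniform neighbourhoods K_n(c_n) ⊆ K_{n+1} where c_n ≤ 2^{-n}, and let d be the Mandelkern metric on M* = M ∪ {∞} defined from h(x) = sup_i (c_i − ρ(x, K_i)). Then for every n, M* = B_d(∞, c_n) ∪ K_{n+1}; that is, every point of M* at d-distance ≥ c_n from ∞ lies in K_{n+1}. -/
open Metric

/-- let `M` be a locally compact, non-compact Polish space with a
nested compact exhaustion `K n` such that the open `c n`-neighbourhood of `K n`
is contained in `K (n+1)`, with `c` strictly decreasing, `0 < c n ≤ 2⁻ⁿ`. With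
`h x = ⨆ i, (c i - ρ(x, K i))` and the Mandelkern metric `d` on `M* = M ∪ {∞}`,
for every `n` one has `M* = B_d(∞, c n) ∪ K (n+1)`: every point of `M*` at
`d`-distance `≥ c n` from `∞` lies in `K (n+1)`. -/
theorem stmt18 (M : Type*) [MetricSpace M] [CompleteSpace M]
    [TopologicalSpace.SeparableSpace M] [LocallyCompactSpace M]
    (hnc : ¬ CompactSpace M)
    (K : ℕ → Set M) (c : ℕ → ℝ)
    (hKcpt : ∀ n, IsCompact (K n))
    (hKne : ∀ n, (K n).Nonempty)
    (hKmono : ∀ n, K n ⊆ K (n + 1))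
    (hKcover : (⋃ n, K n) = Set.univ)
    (hc_pos : ∀ n, 0 < c n)
    (hc_anti : StrictAnti c)
    (hc_le : ∀ n, c n ≤ 2 ^ (-(n : ℤ)))
    (hnbhd : ∀ n, ∀ x ∈ K n, ball x (c n) ⊆ K (n + 1)) :
    ∀ n : ℕ,
      (Set.univ : Set (Option M)) =
        {z : Option M |
            onePointDist (fun x : M => ⨆ i, (c i - infDist x (K i))) z Option.none < c n} ∪
          (Option.some '' K (n + 1)) := by
  intro n
  have hKm : Monotone K := monotone_nat_of_le_succ hKmono
  apply Set.eq_of_subset_of_subset _ (Set.subset_univ _)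
  rintro (_ | x) -
  · left
    show onePointDist _ Option.none Option.none < c n
    simpa [onePointDist] using hc_pos n
  · by_cases hx : x ∈ K (n + 1)
    · exact Or.inr ⟨x, hx, rfl⟩
    · left
      show onePointDist _ (Option.some x) Option.none < c n
      simp only [onePointDist]
      have hsup : (⨆ i, (c i - infDist x (K i))) ≤ c (n + 1) := by
        apply ciSup_le
        intro i
        rcases le_or_gt i n with hi | hi
        · -- then infDist x (K i) ≥ c i
          have hinf : c i ≤ infDist x (K i) := by
            by_contra hlt
            push_neg at hlt
            obtain ⟨y, hy, hdy⟩ := (infDist_lt_iff (hKne i)).1 hlt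
            have : x ∈ K (i + 1) := hnbhd i y hy (by rwa [mem_ball])
            exact hx (hKm (by omega) this)
          linarith [(hc_pos (n+1)).le]
        · have : c i ≤ c (n + 1) := hc_anti.antitone hi
          have : infDist x (K i) ≥ 0 := infDist_nonneg
          linarith [hc_anti.antitone hi]
      exact lt_of_le_of_lt hsup (hc_anti (by omega))
end
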